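/- arXiv:2510.20501 — 6 statements merged into one kernel-verified Lean document; each statement's English description precedes it below -/
import Mathlib

section
/- Let (u_i)_{i≥0} be a sequence of nonnegative reals and q ∈ (1, ∞). If the series ∑_{k≥1} (1/k · ∑_{i≥k} u_i^q)^{1/q} converges, then ∑_{k≥1} u_k converges. -/
open scoped ENNReal NNReal

/-!
With `A n = ((1/n) ∑_{i ≥ n} u_i^q)^{1/q}` the hypothesis says `∑_{n ≥ 1} A n < ∞`. By the power-mean
inequality the block `u_n + ⋯ + u_{2n-1}` is at most `n · A n`. Splitting `ℕ` into the dyadic blocks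
`[2^k, 2^{k+1})` therefore bounds `∑ u` by `u_0 + ∑_k 2^k A(2^k)`, and since `A` is antitone, Cauchy
condensation bounds this by the convergent series `∑ A n`.
-/

open Finset

theorem ENNReal.sum_le_card_mul_rpow_mean {ι : Type*} (s : Finset ι) (g : ι → ℝ≥0∞) {p : ℝ}
    (hp : 1 ≤ p) : ∑ i ∈ s, g i ≤ #s * ((#s : ℝ≥0∞)⁻¹ * ∑ i ∈ s, g i ^ p) ^ (1 / p) := by
  rcases s.eq_empty_or_nonempty with rfl | hs
  · simp
  have hs0 : (#s : ℝ≥0∞) ≠ 0 := by simpa using hs.ne_empty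
  have hs_top : (#s : ℝ≥0∞) ≠ ∞ := ENNReal.natCast_ne_top _
  have hweights : ∑ _i ∈ s, (#s : ℝ≥0∞)⁻¹ = 1 := by
    rw [sum_const, nsmul_eq_mul, ENNReal.mul_inv_cancel hs0 hs_top]
  have jensen : ((#s : ℝ≥0∞)⁻¹ * ∑ i ∈ s, g i) ^ p ≤ (#s : ℝ≥0∞)⁻¹ * ∑ i ∈ s, g i ^ p := by
    simpa only [mul_sum] using ENNReal.rpow_arith_mean_le_arith_mean_rpow s _ g hweights hp
  have hmean : (#s : ℝ≥0∞)⁻¹ * ∑ i ∈ s, g i ≤ ((#s : ℝ≥0∞)⁻¹ * ∑ i ∈ s, g i ^ p) ^ (1 / p) := by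
    rw [← ENNReal.rpow_le_rpow_iff (by positivity : 0 < p), ← ENNReal.rpow_mul,
      one_div_mul_cancel (by positivity), ENNReal.rpow_one]
    exact jensen
  calc ∑ i ∈ s, g i = #s * ((#s : ℝ≥0∞)⁻¹ * ∑ i ∈ s, g i) := by
        rw [← mul_assoc, ENNReal.mul_inv_cancel hs0 hs_top, one_mul]
    _ ≤ _ := by gcongr

noncomputable def tailPowerMean (f : ℕ → ℝ≥0∞) (p : ℝ) (n : ℕ) : ℝ≥0∞ :=
  ((n : ℝ≥0∞)⁻¹ * ∑' i, f (n + i) ^ p) ^ (1 / p)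

theorem tailPowerMean_antitone (f : ℕ → ℝ≥0∞) {p : ℝ} (hp : 0 ≤ p) :
    Antitone (tailPowerMean f p) := by
  intro m n hmn
  obtain ⟨d, rfl⟩ := Nat.exists_eq_add_of_le hmn
  have htail : ∑' i, f (m + d + i) ^ p ≤ ∑' i, f (m + i) ^ p := by
    simpa only [add_assoc] using
      ENNReal.tsum_comp_le_tsum_of_injective (add_right_injective d) fun i => f (m + i) ^ p
  unfold tailPowerMean
  gcongr

theorem sum_range_le_mul_tailPowerMean (f : ℕ → ℝ≥0∞) {p : ℝ} (hp : 1 ≤ p) (n : ℕ) :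
    ∑ i ∈ range n, f (n + i) ≤ n * tailPowerMean f p n := by
  have := ENNReal.sum_le_card_mul_rpow_mean (range n) (fun i => f (n + i)) hp
  rw [card_range] at this
  refine this.trans ?_
  unfold tailPowerMean
  gcongr
  exact ENNReal.sum_le_tsum _

theorem Finset.sum_range_two_pow {M : Type*} [AddCommMonoid M] (f : ℕ → M) (J : ℕ) :
    ∑ n ∈ range (2 ^ J), f n = f 0 + ∑ k ∈ range J, ∑ i ∈ range (2 ^ k), f (2 ^ k + i) := by
  induction J with
  | zero => simp
  | succ J ih => rw [pow_succ, mul_two, sum_range_add, ih, sum_range_succ, add_assoc]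

theorem ENNReal.tsum_eq_add_tsum_dyadic (f : ℕ → ℝ≥0∞) :
    ∑' n, f n = f 0 + ∑' k, ∑ i ∈ range (2 ^ k), f (2 ^ k + i) := by
  rw [ENNReal.tsum_eq_iSup_nat' (tendsto_pow_atTop_atTop_of_one_lt Nat.one_lt_two),
    ENNReal.tsum_eq_iSup_nat, ENNReal.add_iSup]
  exact iSup_congr (sum_range_two_pow f)

theorem ENNReal.tsum_condensed_ne_top {g : ℕ → ℝ≥0∞} (hg : Antitone g)
    (h : ∑' k, g (k + 1) ≠ ∞) : ∑' k, 2 ^ k * g (2 ^ k) ≠ ∞ := by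
  -- `max k 1` keeps `g 0`, possibly `∞`, out of Mathlib's condensation bound.
  have hcond := ENNReal.tsum_condensed_le (f := fun k => g (max k 1))
    fun m n _ hmn => hg (max_le_max_right 1 hmn)
  have hg' : ∑' k, g (max k 1) = g 1 + ∑' k, g (k + 1) := by
    rw [tsum_eq_zero_add' ENNReal.summable]
    simp
  have hpow (k : ℕ) : max (2 ^ k) 1 = 2 ^ k := max_eq_left Nat.one_le_two_pow
  simp only [hpow, max_self, hg'] at hcond
  refine ne_top_of_le_ne_top ?_ hcond
  have hg1 : g 1 ≠ ∞ := ne_top_of_le_ne_top h (ENNReal.le_tsum 0)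
  exact ENNReal.add_ne_top.2
    ⟨hg1, ENNReal.mul_ne_top ENNReal.ofNat_ne_top (ENNReal.add_ne_top.2 ⟨hg1, h⟩)⟩

/-- If `(u_i)` is a sequence of nonnegative reals and `q ∈ (1,∞)`, and the series
`∑_{k≥1} (1/k · ∑_{i≥k} u_i^q)^{1/q}` converges, then `∑ u_k` converges. -/
theorem stmt0 (u : ℕ → ℝ≥0) (q : ℝ) (hq : 1 < q)
    (h : ∑' k : ℕ, ((1 / ((k : ℝ≥0∞) + 1)) *
        ∑' i : ℕ, (u (k + 1 + i) : ℝ≥0∞) ^ q) ^ (1 / q) ≠ ∞) :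
    Summable u := by
  set f : ℕ → ℝ≥0∞ := fun n => u n
  have hmean : ∑' k, tailPowerMean f q (k + 1) ≠ ∞ := by
    simpa [tailPowerMean, f] using h
  have hblocks : ∑' n, f n ≤ f 0 + ∑' k, 2 ^ k * tailPowerMean f q (2 ^ k) := by
    rw [ENNReal.tsum_eq_add_tsum_dyadic]
    gcongr with k
    exact_mod_cast sum_range_le_mul_tailPowerMean f hq.le (2 ^ k)
  refine ENNReal.tsum_coe_ne_top_iff_summable.1 (ne_top_of_le_ne_top ?_ hblocks)
  exact ENNReal.add_ne_top.2 ⟨ENNReal.coe_ne_top,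
    ENNReal.tsum_condensed_ne_top (tailPowerMean_antitone f (by linarith)) hmean⟩
end

section
/- Let (u_i)_{i≥0} be a nonincreasing sequence of nonnegative reals and q ∈ (1, ∞). Then ∑_{k≥1} (1/k · ∑_{i≥k} u_i^q)^{1/q} < ∞ if and only if ∑_{k≥1} u_k < ∞. -/
/-!
Let `a = u` in `ℝ≥0∞` and `M = tailMean a q`, so that the series in question is `∑_{m ≥ 1} M m`.
As `a` is nonincreasing, the `k + 1` terms `a_{k+1}, …, a_{2k+1}` are all at least `a_{2k+1}`,
so `a_{2k+1} ≤ M (k + 1)`, while `∑ a ≤ a_0 + 2 ∑_k a_{2k+1}`.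

Conversely, cutting the tail `i ≥ m` into the dyadic blocks `[m 2^j, m 2^{j+1})` and using the
subadditivity of `x ↦ x ^ (1/q)` gives `M m ≤ ∑_j 2^{j/q} a_{m 2^j}`. Since
`2^j ∑_{m ≥ 1} a_{m 2^j} ≤ ∑ a`, summing over `m` bounds `∑ M` by `∑ a` times the geometric
series `∑_j (2^{1/q} / 2)^j`, which converges because `q > 1`.
-/

open scoped ENNReal NNReal
open Filter Finset Topology

namespace ENNReal

theorem rpow_tsum_le_tsum_rpow {ι : Type*} (c : ι → ℝ≥0∞) {p : ℝ} (hp0 : 0 < p) (hp1 : p ≤ 1) :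
    (∑' i, c i) ^ p ≤ ∑' i, c i ^ p := by
  have hfin (s : Finset ι) : (∑ i ∈ s, c i) ^ p ≤ ∑ i ∈ s, c i ^ p := by
    classical
    induction s using Finset.induction_on with
    | empty => simp [zero_rpow_of_pos hp0]
    | insert i s hi ih =>
      rw [sum_insert hi, sum_insert hi]
      exact (rpow_add_le_add_rpow _ _ hp0.le hp1).trans (add_le_add_right ih _)
  rw [← le_rpow_inv_iff hp0, ENNReal.tsum_eq_iSup_sum]
  exact iSup_le fun s => (le_rpow_inv_iff hp0).2 ((hfin s).trans (ENNReal.sum_le_tsum s))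

theorem tsum_add_eq_tsum_sum_Ico (c : ℕ → ℝ≥0∞) {n : ℕ → ℕ} (hn : StrictMono n) :
    ∑' i, c (n 0 + i) = ∑' j, ∑ i ∈ Ico (n j) (n (j + 1)), c i := by
  have hpartial (J : ℕ) :
      ∑ j ∈ range J, ∑ i ∈ Ico (n j) (n (j + 1)), c i = ∑ i ∈ range (n J - n 0), c (n 0 + i) := by
    rw [← sum_Ico_eq_sum_range]
    induction J with
    | zero => simp
    | succ J ih =>
      rw [sum_range_succ, ih, sum_Ico_consecutive _ (hn.monotone (Nat.zero_le J))
        (hn.monotone J.le_succ)]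
  have hlim : Tendsto (fun J => ∑ i ∈ range (n J - n 0), c (n 0 + i)) atTop
      (𝓝 (∑' i, c (n 0 + i))) :=
    (tendsto_nat_tsum _).comp ((tendsto_sub_atTop_nat _).comp hn.tendsto_atTop)
  simp_rw [← hpartial] at hlim
  exact tendsto_nhds_unique hlim (tendsto_nat_tsum _)

theorem inv_mul_tsum_add_le_tsum_two_pow_mul {c : ℕ → ℝ≥0∞} (hc : Antitone c) {m : ℕ}
    (hm : 0 < m) : (m : ℝ≥0∞)⁻¹ * ∑' i, c (m + i) ≤ ∑' j, 2 ^ j * c (m * 2 ^ j) := by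
  have hn : StrictMono fun j => m * 2 ^ j := fun i j hij =>
    Nat.mul_lt_mul_of_pos_left (Nat.pow_lt_pow_right Nat.one_lt_two hij) hm
  have hblocks := tsum_add_eq_tsum_sum_Ico c hn
  simp only [pow_zero, mul_one] at hblocks
  rw [hblocks, ← ENNReal.tsum_mul_left]
  refine ENNReal.tsum_le_tsum fun j => ?_
  have hcard : #(Ico (m * 2 ^ j) (m * 2 ^ (j + 1))) = m * 2 ^ j := by
    rw [Nat.card_Ico, pow_succ, ← mul_assoc]; omega
  calc (m : ℝ≥0∞)⁻¹ * ∑ i ∈ Ico (m * 2 ^ j) (m * 2 ^ (j + 1)), c i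
      ≤ (m : ℝ≥0∞)⁻¹ * ((m * 2 ^ j : ℕ) * c (m * 2 ^ j)) := by
        gcongr
        refine (sum_le_card_nsmul _ _ _ fun i hi => hc (mem_Ico.1 hi).1).trans_eq ?_
        rw [hcard, nsmul_eq_mul]
    _ = 2 ^ j * c (m * 2 ^ j) := by
        push_cast
        rw [← mul_assoc, ← mul_assoc, ENNReal.inv_mul_cancel (by exact_mod_cast hm.ne')
          (natCast_ne_top m), one_mul]

theorem tsum_natCast_mul_apply_succ_mul_le_tsum {c : ℕ → ℝ≥0∞} (hc : Antitone c) (N : ℕ) :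
    ∑' m, (N : ℝ≥0∞) * c ((m + 1) * N) ≤ ∑' i, c i := by
  rcases N.eq_zero_or_pos with rfl | hN
  · simp
  have hn : StrictMono fun j => j * N := fun i j hij => Nat.mul_lt_mul_of_pos_right hij hN
  have hblocks := tsum_add_eq_tsum_sum_Ico c hn
  simp only [zero_mul, zero_add] at hblocks
  rw [hblocks]
  refine ENNReal.tsum_le_tsum fun j => ?_
  have hcard : #(Ico (j * N) ((j + 1) * N)) = N := by rw [Nat.card_Ico, add_mul]; omega
  refine le_of_eq_of_le ?_ (card_nsmul_le_sum _ _ _ fun i hi => hc (mem_Ico.1 hi).2.le)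
  rw [hcard, nsmul_eq_mul]

theorem tsum_le_add_two_mul_tsum_odd {a : ℕ → ℝ≥0∞} (ha : Antitone a) :
    ∑' n, a n ≤ a 0 + 2 * ∑' k, a (2 * k + 1) := by
  have heven : ∑' k, a (2 * k) ≤ a 0 + ∑' k, a (2 * k + 1) := by
    rw [tsum_eq_zero_add' ENNReal.summable, mul_zero]
    gcongr with k
    exact ha (by omega)
  rw [← tsum_even_add_odd ENNReal.summable ENNReal.summable, two_mul, ← add_assoc]
  gcongr

end ENNReal

noncomputable def tailMean (a : ℕ → ℝ≥0∞) (q : ℝ) (m : ℕ) : ℝ≥0∞ :=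
  ((m : ℝ≥0∞)⁻¹ * ∑' i, a (m + i) ^ q) ^ (1 / q)

section

variable {a : ℕ → ℝ≥0∞} {q : ℝ}

theorem apply_two_mul_add_one_le_tailMean (ha : Antitone a) (hq : 0 < q) (k : ℕ) :
    a (2 * k + 1) ≤ tailMean a q (k + 1) := by
  have hsum : ((k + 1 : ℕ) : ℝ≥0∞) * a (2 * k + 1) ^ q ≤ ∑' i, a (k + 1 + i) ^ q :=
    calc ((k + 1 : ℕ) : ℝ≥0∞) * a (2 * k + 1) ^ q = ∑ _i ∈ range (k + 1), a (2 * k + 1) ^ q := by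
          rw [sum_const, card_range, nsmul_eq_mul]
      _ ≤ ∑ i ∈ range (k + 1), a (k + 1 + i) ^ q :=
          sum_le_sum fun i hi => ENNReal.rpow_le_rpow (ha (by simp at hi; omega)) hq.le
      _ ≤ ∑' i, a (k + 1 + i) ^ q := ENNReal.sum_le_tsum _
  rw [tailMean, one_div, ENNReal.le_rpow_inv_iff hq, ← ENNReal.div_eq_inv_mul,
    ENNReal.le_div_iff_mul_le (Or.inl (by simp)) (Or.inl (ENNReal.natCast_ne_top _)), mul_comm]
  exact hsum

theorem tailMean_le_tsum_dyadic (ha : Antitone a) (hq : 1 ≤ q) {m : ℕ} (hm : 0 < m) :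
    tailMean a q m ≤ ∑' j, ((2 : ℝ≥0∞) ^ (1 / q)) ^ j * a (m * 2 ^ j) := by
  have hq0 : 0 < q := one_pos.trans_le hq
  have hpow : Antitone fun i => a i ^ q := fun i j h => ENNReal.rpow_le_rpow (ha h) hq0.le
  calc tailMean a q m ≤ (∑' j, 2 ^ j * a (m * 2 ^ j) ^ q) ^ (1 / q) :=
        ENNReal.rpow_le_rpow (ENNReal.inv_mul_tsum_add_le_tsum_two_pow_mul hpow hm) (by positivity)
    _ ≤ ∑' j, (2 ^ j * a (m * 2 ^ j) ^ q) ^ (1 / q) :=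
        ENNReal.rpow_tsum_le_tsum_rpow _ (by positivity) ((div_le_one hq0).2 hq)
    _ = ∑' j, ((2 : ℝ≥0∞) ^ (1 / q)) ^ j * a (m * 2 ^ j) := by
        refine tsum_congr fun j => ?_
        rw [ENNReal.mul_rpow_of_nonneg _ _ (by positivity), one_div, ENNReal.rpow_rpow_inv hq0.ne',
          ← ENNReal.rpow_natCast, ← ENNReal.rpow_natCast, ← ENNReal.rpow_mul, ← ENNReal.rpow_mul,
          mul_comm (j : ℝ)]

theorem tsum_tailMean_succ_le (ha : Antitone a) (hq : 1 ≤ q) :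
    ∑' k, tailMean a q (k + 1) ≤ (1 - 2 ^ (1 / q) / 2)⁻¹ * ∑' n, a n := by
  set r : ℝ≥0∞ := 2 ^ (1 / q)
  calc ∑' k, tailMean a q (k + 1) ≤ ∑' k, ∑' j, r ^ j * a ((k + 1) * 2 ^ j) :=
        ENNReal.tsum_le_tsum fun k => tailMean_le_tsum_dyadic ha hq k.succ_pos
    _ = ∑' j, (r / 2) ^ j * ∑' k, ((2 ^ j : ℕ) : ℝ≥0∞) * a ((k + 1) * 2 ^ j) := by
        rw [ENNReal.tsum_comm]
        refine tsum_congr fun j => ?_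
        rw [← ENNReal.tsum_mul_left]
        refine tsum_congr fun k => ?_
        rw [Nat.cast_pow, Nat.cast_ofNat, ← mul_assoc, ← mul_pow,
          ENNReal.div_mul_cancel two_ne_zero ENNReal.ofNat_ne_top]
    _ ≤ ∑' j, (r / 2) ^ j * ∑' n, a n :=
        ENNReal.tsum_le_tsum fun j =>
          mul_le_mul_right (ENNReal.tsum_natCast_mul_apply_succ_mul_le_tsum ha _) _
    _ = (1 - r / 2)⁻¹ * ∑' n, a n := by rw [ENNReal.tsum_mul_right, ENNReal.tsum_geometric]

end

/-- For a nonincreasing sequence `(u_i)` of nonnegative reals and `q ∈ (1,∞)`,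
`∑_{k≥1} (1/k · ∑_{i≥k} u_i^q)^{1/q} < ∞` iff `∑_{k≥1} u_k < ∞`. -/
theorem stmt1 (u : ℕ → ℝ≥0) (hu : Antitone u) (q : ℝ) (hq : 1 < q) :
    (∑' k : ℕ, ((1 / ((k : ℝ≥0∞) + 1)) *
        ∑' i : ℕ, (u (k + 1 + i) : ℝ≥0∞) ^ q) ^ (1 / q) ≠ ∞) ↔ Summable u := by
  set a : ℕ → ℝ≥0∞ := fun n => u n
  have ha : Antitone a := fun m n h => ENNReal.coe_le_coe.2 (hu h)
  have hsummand (k : ℕ) : ((1 / ((k : ℝ≥0∞) + 1)) *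
      ∑' i : ℕ, (u (k + 1 + i) : ℝ≥0∞) ^ q) ^ (1 / q) = tailMean a q (k + 1) := by
    rw [tailMean, one_div, Nat.cast_succ]
  have hC : (1 - (2 : ℝ≥0∞) ^ (1 / q) / 2)⁻¹ ≠ ∞ := by
    refine ENNReal.inv_ne_top.2 (tsub_pos_iff_lt.2 ?_).ne'
    rw [ENNReal.div_lt_iff (Or.inl two_ne_zero) (Or.inl ENNReal.ofNat_ne_top), one_mul]
    conv_rhs => rw [← ENNReal.rpow_one 2]
    exact ENNReal.rpow_lt_rpow_of_exponent_lt (by norm_num) ENNReal.ofNat_ne_top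
      ((div_lt_one (by linarith)).2 hq)
  rw [tsum_congr hsummand, ← ENNReal.tsum_coe_ne_top_iff_summable]
  constructor
  · intro h
    have hbound : ∑' n, a n ≤ a 0 + 2 * ∑' k, tailMean a q (k + 1) := by
      refine (ENNReal.tsum_le_add_two_mul_tsum_odd ha).trans ?_
      gcongr with k
      exact apply_two_mul_add_one_le_tailMean ha (by linarith) k
    exact ne_top_of_le_ne_top (by finiteness) hbound
  · intro h
    exact ne_top_of_le_ne_top (ENNReal.mul_ne_top hC h) (tsum_tailMean_succ_le ha hq.le)
end

section
/- Define a_i = 0 if i is not a power of 2, and a_{2^k} = 1/(2^{k/2} k^b) for k ≥ 1, where b ∈ (1/2, 1). Then ∑_{i≥0} a_i < ∞ and ∑_{i≥0} i·a_i² < ∞, but ∑_{k≥2} k^{-1/2} (∑_{i≥k} a_i²)^{1/2} = ∞. -/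
open Real

/-! Only the terms `a (2 ^ k) = 1 / (√2 ^ k * k ^ b)` matter, so the first two series reduce to
`∑ √2⁻¹ ^ k` and `∑ 2 ^ k a (2 ^ k) ^ 2 = ∑ k ^ (-2b)`, both finite. The third series has
antitone terms `n ^ (-1/2) (∑_{i ≥ n} a i ^ 2) ^ (1/2)`, so by Cauchy condensation it converges
only if `∑ 2 ^ k (2 ^ k) ^ (-1/2) a (2 ^ k) = ∑ k ^ (-b)` does, which fails since `b < 1`. -/

theorem two_rpow_natCast_div_two (k : ℕ) : (2 : ℝ) ^ ((k : ℝ) / 2) = √2 ^ k := by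
  rw [sqrt_eq_rpow, ← rpow_natCast, ← rpow_mul zero_le_two, one_div_mul_eq_div]

theorem summable_one_div_sqrt_two_pow_mul_rpow {b : ℝ} (hb : 0 ≤ b) :
    Summable fun k : ℕ => 1 / (√2 ^ k * (k : ℝ) ^ b) := by
  have hr : (√2)⁻¹ < 1 := inv_lt_one_of_one_lt₀ (by simp [lt_sqrt])
  refine (summable_geometric_of_lt_one (by positivity) hr).of_nonneg_of_le
    (fun k => by positivity) fun k => ?_
  have hk : ((k : ℝ) ^ b)⁻¹ ≤ 1 := by
    rcases k.eq_zero_or_pos with rfl | hk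
    · rcases hb.eq_or_lt with rfl | hb
      · simp
      · simp [zero_rpow hb.ne']
    · exact inv_le_one_of_one_le₀ (one_le_rpow (by exact_mod_cast hk) hb)
  rw [one_div, mul_inv, inv_pow]
  exact mul_le_of_le_one_right (by positivity) hk

theorem two_pow_mul_sq_one_div_sqrt_two_pow_mul (k : ℕ) (x : ℝ) :
    (2 : ℝ) ^ k * (1 / (√2 ^ k * x)) ^ 2 = (x ^ 2)⁻¹ := by
  rw [div_pow, mul_pow, ← pow_mul, mul_comm k, pow_mul, sq_sqrt zero_le_two, one_pow,
    mul_one_div, div_mul_cancel_left₀ (by positivity)]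

theorem antitone_tsum_nat_add {u : ℕ → ℝ} (hu : ∀ i, 0 ≤ u i) (hsum : Summable u) :
    Antitone fun n => ∑' i, u (n + i) := by
  refine antitone_nat_of_succ_le fun n => ?_
  have hs : Summable fun i => u (n + i) := hsum.comp_injective (add_right_injective n)
  rw [hs.tsum_eq_zero_add]
  simp only [add_zero, add_assoc, add_comm 1]
  exact le_add_of_nonneg_left (hu n)

theorem not_summable_inv_sqrt_mul_sqrt_tsum_nat_add {u : ℕ → ℝ} (hu : ∀ i, 0 ≤ u i)
    (hsum : Summable u) (hdiv : ¬ Summable fun k : ℕ => √(2 ^ k * u (2 ^ k))) :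
    ¬ Summable fun n : ℕ => 1 / √n * √(∑' i, u (n + i)) := by
  have tail_anti := antitone_tsum_nat_add hu hsum
  have le_tail (n : ℕ) : u n ≤ ∑' i, u (n + i) :=
    (hsum.comp_injective (add_right_injective n)).le_tsum 0 (fun i _ => hu _)
  intro hF
  rw [← summable_condensed_iff_of_nonneg (fun n => by positivity) fun _ _ _ hmn =>
    mul_le_mul (one_div_le_one_div_of_le (by positivity) (sqrt_le_sqrt (by exact_mod_cast hmn)))
      (sqrt_le_sqrt (tail_anti hmn)) (sqrt_nonneg _) (by positivity)] at hF
  simp only [Nat.cast_pow, Nat.cast_ofNat] at hF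
  refine hdiv (hF.of_nonneg_of_le (fun k => sqrt_nonneg _) fun k => ?_)
  calc √(2 ^ k * u (2 ^ k)) = √(2 ^ k) * √(u (2 ^ k)) := sqrt_mul (by positivity) _
    _ ≤ √(2 ^ k) * √(∑' i, u (2 ^ k + i)) := by gcongr; exact le_tail _
    _ = 2 ^ k * (1 / √(2 ^ k) * √(∑' i, u (2 ^ k + i))) := by
      rw [← mul_assoc, mul_one_div, div_sqrt]

/-- With `a_i = 0` if `i` is not of the form `2^k` (`k ≥ 1`), and
`a_{2^k} = 1/(2^{k/2} k^b)` for `b ∈ (1/2,1)`, we have `∑ a_i < ∞` and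
`∑ i a_i² < ∞`, but `∑_{k≥2} k^{-1/2} (∑_{i≥k} a_i²)^{1/2} = ∞`. -/
theorem stmt3 (b : ℝ) (hb : 1 / 2 < b) (hb1 : b < 1) (a : ℕ → ℝ)
    (ha2 : ∀ k : ℕ, 1 ≤ k → a (2 ^ k) = 1 / ((2 : ℝ) ^ ((k : ℝ) / 2) * (k : ℝ) ^ b))
    (ha0 : ∀ i : ℕ, (∀ k : ℕ, 1 ≤ k → i ≠ 2 ^ k) → a i = 0) :
    Summable a ∧ Summable (fun i : ℕ => (i : ℝ) * a i ^ 2) ∧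
      ¬ Summable (fun k : ℕ =>
        (1 / Real.sqrt ((k : ℝ) + 2)) * Real.sqrt (∑' i : ℕ, a (k + 2 + i) ^ 2)) := by
  have ha (k : ℕ) : a (2 ^ k) = 1 / (√2 ^ k * (k : ℝ) ^ b) := by
    rcases k.eq_zero_or_pos with rfl | hk
    -- at `k = 0` both sides vanish: `a 1 = 0`, and `0 ^ b = 0` turns the right side into `1 / 0 = 0`
    · have h1 : a 1 = 0 := ha0 1 fun k hk h => (Nat.one_lt_two_pow (by omega)).ne h
      simp [h1, zero_rpow (by linarith : b ≠ 0)]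
    · rw [ha2 k hk, two_rpow_natCast_div_two]
  have summable_iff_pow {f : ℕ → ℝ} (hf : ∀ i, a i = 0 → f i = 0) :
      Summable (fun k => f (2 ^ k)) ↔ Summable f :=
    (Nat.pow_right_injective le_rfl).summable_iff fun i hi =>
      hf i (ha0 i fun k _ h => hi ⟨k, h.symm⟩)
  have h_weight (k : ℕ) : (2 : ℝ) ^ k * a (2 ^ k) ^ 2 = (((k : ℝ) ^ b) ^ 2)⁻¹ := by
    rw [ha, two_pow_mul_sq_one_div_sqrt_two_pow_mul]
  have h_weighted : Summable fun k : ℕ => (2 : ℝ) ^ k * a (2 ^ k) ^ 2 := by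
    simp only [h_weight, ← rpow_mul_natCast (Nat.cast_nonneg _), Nat.cast_ofNat]
    exact summable_nat_rpow_inv.2 (by linarith)
  refine ⟨?_, ?_, ?_⟩
  · rw [← summable_iff_pow fun i h => h]
    simpa only [ha] using summable_one_div_sqrt_two_pow_mul_rpow (by linarith)
  · rw [← summable_iff_pow fun i h => by simp [h]]
    simpa only [Nat.cast_pow, Nat.cast_ofNat] using h_weighted
  · have h_sq : Summable fun i => a i ^ 2 := by
      rw [← summable_iff_pow fun i h => by simp [h]]
      exact h_weighted.of_nonneg_of_le (fun k => sq_nonneg _) fun k =>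
        le_mul_of_one_le_left (sq_nonneg _) (one_le_pow₀ one_le_two)
    have := not_summable_inv_sqrt_mul_sqrt_tsum_nat_add (fun i => sq_nonneg (a i)) h_sq ?_
    · rw [← summable_nat_add_iff 2] at this
      simpa only [Nat.cast_add, Nat.cast_ofNat] using this
    · simp only [h_weight, sqrt_inv, sqrt_sq (rpow_nonneg (Nat.cast_nonneg _) _)]
      exact fun h => (summable_nat_rpow_inv.1 h).not_ge hb1.le
end

section
/- If (u_k)_{k≥1} is a sequence of nonnegative reals such that the sequence k ↦ u_k/√k is nonincreasing and ∑_{k≥1} u_k/√k < ∞, then ∑_{k≥1} u_k² < ∞. -/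
/-!
Put `v k = u (k+1) / √(k+1)`. Since `v` is nonincreasing, its first `k+1` terms are each at least
`v k`, so `(k+1) v k ≤ ∑ v`. Hence `u (k+1)² = (k+1) v k · v k ≤ (∑ v) · v k`, which is summable.
-/

namespace Antitone

variable {f : ℕ → ℝ}

theorem nonneg_of_summable (hf : Antitone f) (hs : Summable f) (n : ℕ) : 0 ≤ f n :=
  hf.le_of_tendsto hs.tendsto_atTop_zero n

theorem succ_mul_le_tsum (hf : Antitone f) (hs : Summable f) (n : ℕ) :
    ((n : ℝ) + 1) * f n ≤ ∑' k, f k :=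
  calc ((n : ℝ) + 1) * f n = (Finset.range (n + 1)).card • f n := by simp
    _ ≤ ∑ k ∈ Finset.range (n + 1), f k :=
      Finset.card_nsmul_le_sum _ _ _ fun k hk => hf (Finset.mem_range_succ_iff.mp hk)
    _ ≤ ∑' k, f k := hs.sum_le_tsum _ fun k _ => hf.nonneg_of_summable hs k

theorem summable_succ_mul_sq (hf : Antitone f) (hs : Summable f) :
    Summable fun n : ℕ => ((n : ℝ) + 1) * f n ^ 2 := by
  refine (hs.mul_left (∑' k, f k)).of_nonneg_of_le (fun n => by positivity) fun n => ?_
  rw [sq, ← mul_assoc]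
  exact mul_le_mul_of_nonneg_right (hf.succ_mul_le_tsum hs n) (hf.nonneg_of_summable hs n)

end Antitone

theorem stmt5_general (u : ℕ → ℝ)
    (hmono : ∀ j k : ℕ, 1 ≤ j → j ≤ k →
      u k / Real.sqrt k ≤ u j / Real.sqrt j)
    (hsum : Summable (fun k : ℕ => u (k + 1) / Real.sqrt ((k : ℝ) + 1))) :
    Summable (fun k : ℕ => u (k + 1) ^ 2) := by
  have hanti : Antitone fun k : ℕ => u (k + 1) / Real.sqrt ((k : ℝ) + 1) := fun j k hjk => by
    simpa using hmono (j + 1) (k + 1) (by omega) (by omega)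
  refine (hanti.summable_succ_mul_sq hsum).congr fun k => ?_
  rw [div_pow, Real.sq_sqrt (by positivity)]
  field_simp

/-- If `(u_k)_{k≥1}` is nonnegative, `k ↦ u_k/√k` is nonincreasing and
`∑ u_k/√k < ∞`, then `∑ u_k² < ∞`. -/
theorem stmt5 (u : ℕ → ℝ) (hnn : ∀ k, 0 ≤ u k)
    (hmono : ∀ j k : ℕ, 1 ≤ j → j ≤ k →
      u k / Real.sqrt k ≤ u j / Real.sqrt j)
    (hsum : Summable (fun k : ℕ => u (k + 1) / Real.sqrt ((k : ℝ) + 1))) :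
    Summable (fun k : ℕ => u (k + 1) ^ 2) :=
  stmt5_general u hmono hsum
end

section
/- Let (X_i)_{i≥1} be random variables in L²(P) adapted in the sense that each E(X_i | F_0) is defined for a sub-σ-algebra F_0, and suppose ∑_{k≥1} ‖E(X_k | F_0)‖₂² < ∞. Then n^{-1} ‖max_{1≤k≤n} |E(S_k | F_0)|‖₂² → 0 as n → ∞, where S_k = X_1 + ⋯ + X_n up to k. -/
/-!
By linearity, `E(S_k | F₀) = ∑_{i ≤ k} E(X_i | F₀)`, so the maximum over `k ≤ n` is dominated
pointwise by `∑_{i ≤ n} |E(X_i | F₀)|`, and Minkowski's inequality bounds its `L²` norm by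
`∑_{i ≤ n} a_i` with `a_i = ‖E(X_i | F₀)‖₂`. It remains to see that `(∑_{i < n} a_i)² / n → 0`
whenever `∑ a_i² < ∞`: split the sum at a fixed `m`; the head is a constant, and by Cauchy–Schwarz
the square of the tail is at most `n ∑_{i ≥ m} a_i²`, which is a small multiple of `n`.
-/

open MeasureTheory Filter Finset Topology
open scoped ENNReal

theorem sq_sum_range_le_of_summable_sq {b : ℕ → ℝ} (hb : Summable fun k => b k ^ 2) {m n : ℕ}
    (hmn : m ≤ n) :
    (∑ k ∈ range n, b k) ^ 2 ≤ 2 * (∑ k ∈ range m, b k) ^ 2 + 2 * n * ∑' k, b (k + m) ^ 2 := by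
  have htail : (∑ k ∈ Ico m n, b k) ^ 2 ≤ n * ∑' k, b (k + m) ^ 2 := calc
    _ ≤ (#(Ico m n) : ℝ) * ∑ k ∈ Ico m n, b k ^ 2 := sq_sum_le_card_mul_sum_sq
    _ ≤ n * ∑' k, b (k + m) ^ 2 := by
      gcongr
      · simp
      · rw [sum_Ico_eq_sum_range]
        simp_rw [add_comm m]
        exact ((summable_nat_add_iff m).2 hb).sum_le_tsum _ fun _ _ => sq_nonneg _
  rw [← sum_range_add_sum_Ico b hmn]
  linarith [add_sq_le (a := ∑ k ∈ range m, b k) (b := ∑ k ∈ Ico m n, b k)]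

theorem tendsto_sq_sum_range_div_of_summable_sq {b : ℕ → ℝ} (hb : Summable fun k => b k ^ 2) :
    Tendsto (fun n : ℕ => (∑ k ∈ range n, b k) ^ 2 / n) atTop (𝓝 0) := by
  refine tendsto_order.2 ⟨fun a ha => Eventually.of_forall fun n => ha.trans_le (by positivity),
    fun ε hε => ?_⟩
  obtain ⟨m, hm⟩ := ((tendsto_sum_nat_add fun k => b k ^ 2).eventually
    (gt_mem_nhds (by positivity : 0 < ε / 4))).exists
  set C := ∑ k ∈ range m, b k
  set T := ∑' k, b (k + m) ^ 2
  filter_upwards [(tendsto_const_div_atTop_nhds_zero_nat (2 * C ^ 2)).eventually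
    (gt_mem_nhds (half_pos hε)), eventually_ge_atTop (max m 1)] with n hCn hn
  have hn0 : (0 : ℝ) < n := by exact_mod_cast (le_max_right m 1).trans hn
  calc _ ≤ (2 * C ^ 2 + 2 * n * T) / n := by
        gcongr; exact sq_sum_range_le_of_summable_sq hb ((le_max_left m 1).trans hn)
    _ = 2 * C ^ 2 / n + 2 * T := by field_simp
    _ < ε := by linarith

theorem iSup_abs_sum_Icc_le_sum_abs (y : ℕ → ℝ) (n : ℕ) :
    ⨆ k : Icc 1 n, |∑ i ∈ Icc 1 (k : ℕ), y i| ≤ ∑ i ∈ Icc 1 n, |y i| :=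
  Real.iSup_le (fun k => (abs_sum_le_sum_abs _ _).trans <|
      sum_le_sum_of_subset_of_nonneg (Icc_subset_Icc_right (mem_Icc.1 k.2).2)
        fun _ _ _ => abs_nonneg _)
    (sum_nonneg fun _ _ => abs_nonneg _)

theorem eLpNorm_iSup_abs_sum_Icc_le {Ω : Type*} {m0 : MeasurableSpace Ω} {μ : Measure Ω}
    {p : ℝ≥0∞} (hp : 1 ≤ p) {Y : ℕ → Ω → ℝ} (hY : ∀ i, AEStronglyMeasurable (Y i) μ) (n : ℕ) :
    eLpNorm (fun ω => ⨆ k : Icc 1 n, |∑ i ∈ Icc 1 (k : ℕ), Y i ω|) p μ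
      ≤ ∑ i ∈ Icc 1 n, eLpNorm (Y i) p μ := calc
  _ ≤ eLpNorm (∑ i ∈ Icc 1 n, fun ω => ‖Y i ω‖) p μ := by
    refine eLpNorm_mono_real fun ω => ?_
    rw [Real.norm_of_nonneg (Real.iSup_nonneg fun _ => abs_nonneg _), Finset.sum_apply]
    exact iSup_abs_sum_Icc_le_sum_abs (Y · ω) n
  _ ≤ ∑ i ∈ Icc 1 n, eLpNorm (fun ω => ‖Y i ω‖) p μ := eLpNorm_sum_le (fun i _ => (hY i).norm) hp
  _ = _ := by simp_rw [eLpNorm_norm]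

theorem stmt7_general {Ω : Type*} [m0 : MeasurableSpace Ω] (μ : Measure Ω) [IsProbabilityMeasure μ]
    (F0 : MeasurableSpace Ω) (X : ℕ → Ω → ℝ)
    (hX : ∀ i, MemLp (X i) 2 μ)
    (hsum : Summable (fun k : ℕ => ((eLpNorm (condExp F0 μ (X (k + 1))) 2 μ).toReal) ^ 2)) :
    Tendsto (fun n : ℕ => (1 / (n : ℝ)) *
      ((eLpNorm (fun ω => ⨆ k : Finset.Icc 1 n,
        |condExp F0 μ (fun ω' => ∑ i ∈ Finset.Icc 1 (k : ℕ), X i ω') ω|) 2 μ).toReal) ^ 2)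
      atTop (nhds 0) := by
  have hcondExp : ∀ i, MemLp (μ[X i | F0]) 2 μ := fun i => (hX i).condExp one_le_two
  have hlinear : ∀ᵐ ω ∂μ, ∀ k, μ[fun ω' => ∑ i ∈ Icc 1 k, X i ω' | F0] ω
      = ∑ i ∈ Icc 1 k, μ[X i | F0] ω := by
    refine ae_all_iff.2 fun k => ?_
    filter_upwards [condExp_finsetSum (fun i _ => (hX i).integrable one_le_two) F0] with ω hω
    rw [← Finset.sum_fn, hω, Finset.sum_apply]
  have hbound : ∀ n : ℕ, (eLpNorm (fun ω => ⨆ k : Icc 1 n,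
      |μ[fun ω' => ∑ i ∈ Icc 1 (k : ℕ), X i ω' | F0] ω|) 2 μ).toReal
      ≤ ∑ k ∈ range n, (eLpNorm (μ[X (k + 1) | F0]) 2 μ).toReal := by
    intro n
    have hfin : ∀ i ∈ Icc 1 n, eLpNorm (μ[X i | F0]) 2 μ ≠ ∞ := fun i _ => (hcondExp i).2.ne
    rw [range_eq_Ico, sum_Ico_add' (fun i => (eLpNorm (μ[X i | F0]) 2 μ).toReal), zero_add,
      Ico_add_one_right_eq_Icc, ← ENNReal.toReal_sum hfin]
    refine ENNReal.toReal_mono (ENNReal.sum_ne_top.2 hfin) (le_of_eq_of_le (eLpNorm_congr_ae ?_)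
      (eLpNorm_iSup_abs_sum_Icc_le one_le_two (fun i => (hcondExp i).1) n))
    filter_upwards [hlinear] with ω hω
    simp_rw [hω]
  refine squeeze_zero (fun n => by positivity) (fun n => ?_)
    (tendsto_sq_sum_range_div_of_summable_sq hsum)
  rw [one_div_mul_eq_div]
  gcongr
  exact hbound n

/-- If `∑_k ‖E(X_k|F₀)‖₂² < ∞`, then `n⁻¹ ‖max_{1≤k≤n} |E(S_k|F₀)|‖₂² → 0`,
where `S_k = X_1 + ⋯ + X_k`. -/
theorem stmt7 {Ω : Type*} [m0 : MeasurableSpace Ω] (μ : Measure Ω) [IsProbabilityMeasure μ]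
    (F0 : MeasurableSpace Ω) (hF0 : F0 ≤ m0) (X : ℕ → Ω → ℝ)
    (hX : ∀ i, MemLp (X i) 2 μ)
    (hsum : Summable (fun k : ℕ => ((eLpNorm (condExp F0 μ (X (k + 1))) 2 μ).toReal) ^ 2)) :
    Tendsto (fun n : ℕ => (1 / (n : ℝ)) *
      ((eLpNorm (fun ω => ⨆ k : Finset.Icc 1 n,
        |condExp F0 μ (fun ω' => ∑ i ∈ Finset.Icc 1 (k : ℕ), X i ω') ω|) 2 μ).toReal) ^ 2)
      atTop (nhds 0) :=
  stmt7_general (m0 := m0) μ F0 X hX hsum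
end

section
/- Let (X_i)_{i≥1} be random variables in L²(P) with ∑_{k≥1} ‖E(X_k | F_0)‖₂² < ∞. Then n^{-1} max_{1≤k≤n} (E(S_k | F_0))² → 0 almost surely as n → ∞. -/
/-!
Write `Yᵢ = E(Xᵢ | F₀)`. Since `∑ E Yᵢ² < ∞`, the series `∑ Yᵢ(ω)²` converges almost surely, and
`E(S_k | F₀) = Y₁ + ⋯ + Y_k` almost surely, so it suffices to treat a fixed square-summable real
sequence `y` with partial sums `T_k`. By Cauchy–Schwarz, `(T_k - T_m)² ≤ n ∑_{i>m} yᵢ²` for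
`m ≤ k ≤ n`, hence `n⁻¹ max_{k≤n} T_k² ≤ 2 n⁻¹ max_{j≤m} T_j² + 2 ∑_{i>m} yᵢ²`. Letting `n → ∞`
and then `m → ∞` gives the claim.
-/

open MeasureTheory Filter Finset Topology

section PartialSums

variable {y : ℕ → ℝ}

lemma sum_Ico_sq_le_tsum_sub_sum_range (hy : Summable fun i => y i ^ 2) (m k : ℕ) :
    ∑ i ∈ Ico m k, y i ^ 2 ≤ ∑' i, y i ^ 2 - ∑ i ∈ range m, y i ^ 2 := by
  have hle (s : Finset ℕ) : ∑ i ∈ s, y i ^ 2 ≤ ∑' i, y i ^ 2 :=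
    hy.sum_le_tsum s fun i _ => sq_nonneg (y i)
  rcases le_total m k with hmk | hkm
  · linarith [sum_range_add_sum_Ico (fun i => y i ^ 2) hmk, hle (range k)]
  · rw [Ico_eq_empty_of_le hkm, sum_empty]
    linarith [hle (range m)]

lemma sq_sum_Ico_le_mul_tsum_sub_sum_range (hy : Summable fun i => y i ^ 2) {k n : ℕ}
    (hkn : k ≤ n) (m : ℕ) :
    (∑ i ∈ Ico m k, y i) ^ 2 ≤ n * (∑' i, y i ^ 2 - ∑ i ∈ range m, y i ^ 2) := by
  refine (sq_sum_le_card_mul_sum_sq (s := Ico m k) (f := y)).trans ?_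
  have hcard : (#(Ico m k) : ℝ) ≤ n := by
    rw [Nat.card_Ico]
    exact_mod_cast (Nat.sub_le k m).trans hkn
  exact mul_le_mul hcard (sum_Ico_sq_le_tsum_sub_sum_range hy m k)
    (sum_nonneg fun i _ => sq_nonneg (y i)) n.cast_nonneg

lemma sq_sum_range_le (hy : Summable fun i => y i ^ 2) {k n : ℕ} (hkn : k ≤ n) (m : ℕ) :
    (∑ i ∈ range k, y i) ^ 2 ≤ 2 * ∑ j ∈ range (m + 1), (∑ i ∈ range j, y i) ^ 2
      + 2 * n * (∑' i, y i ^ 2 - ∑ i ∈ range m, y i ^ 2) := by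
  set C := ∑ j ∈ range (m + 1), (∑ i ∈ range j, y i) ^ 2
  have hC (j : ℕ) (hj : j ≤ m) : (∑ i ∈ range j, y i) ^ 2 ≤ C :=
    single_le_sum (fun j _ => sq_nonneg (∑ i ∈ range j, y i)) (mem_range.2 (Nat.lt_succ_of_le hj))
  have htail : 0 ≤ (n : ℝ) * (∑' i, y i ^ 2 - ∑ i ∈ range m, y i ^ 2) :=
    (sq_nonneg _).trans (sq_sum_Ico_le_mul_tsum_sub_sum_range hy (Nat.zero_le n) m)
  rcases le_total k m with hkm | hmk
  · nlinarith [hC k hkm, (sq_nonneg _).trans (hC 0 (Nat.zero_le m))]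
  · rw [← sum_range_add_sum_Ico y hmk]
    nlinarith [hC m le_rfl, sq_sum_Ico_le_mul_tsum_sub_sum_range hy hkn m,
      sq_nonneg ((∑ i ∈ range m, y i) - ∑ i ∈ Ico m k, y i)]

end PartialSums

lemma tendsto_zero_of_forall_eventually_le_div_add {a b c : ℕ → ℝ} (ha : ∀ n, 0 ≤ a n)
    (hc : Tendsto c atTop (𝓝 0)) (hab : ∀ m, ∀ᶠ n in atTop, a n ≤ b m / n + c m) :
    Tendsto a atTop (𝓝 0) := by
  refine tendsto_order.2 ⟨fun ε hε => .of_forall fun n => hε.trans_le (ha n), fun ε hε => ?_⟩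
  obtain ⟨m, hm⟩ := (hc.eventually (gt_mem_nhds (half_pos hε))).exists
  have hb : Tendsto (fun n : ℕ => b m / n) atTop (𝓝 0) := tendsto_const_div_atTop_nhds_zero_nat _
  filter_upwards [hab m, hb.eventually (gt_mem_nhds (half_pos hε))] with n hn hbn
  linarith

theorem tendsto_one_div_mul_iSup_sq_sum_range {y : ℕ → ℝ} (hy : Summable fun i => y i ^ 2) :
    Tendsto (fun n : ℕ => (1 / (n : ℝ)) * ⨆ k : Icc 1 n, (∑ i ∈ range (k : ℕ), y i) ^ 2)
      atTop (𝓝 0) := by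
  have htail : Tendsto (fun m => ∑' i, y i ^ 2 - ∑ i ∈ range m, y i ^ 2) atTop (𝓝 0) := by
    have := hy.tendsto_sum_tsum_nat.const_sub (∑' i, y i ^ 2)
    rwa [sub_self] at this
  refine tendsto_zero_of_forall_eventually_le_div_add
    (b := fun m => 2 * ∑ j ∈ range (m + 1), (∑ i ∈ range j, y i) ^ 2)
    (fun n => ?_) (by simpa using htail.const_mul 2) fun m => ?_
  · exact mul_nonneg (by positivity) (Real.iSup_nonneg fun k => sq_nonneg _)
  filter_upwards [eventually_ge_atTop 1] with n hn
  have : Nonempty (Icc 1 n) := ⟨⟨1, mem_Icc.2 ⟨le_rfl, hn⟩⟩⟩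
  have hn' : (0 : ℝ) < n := by exact_mod_cast hn
  rw [one_div, inv_mul_le_iff₀ hn', mul_add, mul_div_cancel₀ _ hn'.ne']
  refine ciSup_le fun k => (sq_sum_range_le hy (mem_Icc.1 k.2).2 m).trans_eq ?_
  ring

lemma eLpNorm_sq_one {Ω : Type*} {_ : MeasurableSpace Ω} (μ : Measure Ω) (f : Ω → ℝ) :
    eLpNorm (fun ω => f ω ^ 2) 1 μ = eLpNorm f 2 μ ^ 2 := by
  have := eLpNorm_norm_rpow (μ := μ) (p := 1) f (q := 2) two_pos
  simp only [Real.norm_eq_abs, Real.rpow_two, sq_abs, one_mul, ENNReal.ofReal_ofNat] at this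
  rw [this]
  norm_cast

lemma ae_summable_sq_of_summable_sq_eLpNorm {Ω ι : Type*} [Countable ι] {_ : MeasurableSpace Ω}
    {μ : Measure Ω} {f : ι → Ω → ℝ} (hf : ∀ i, MemLp (f i) 2 μ)
    (hsum : Summable fun i => (eLpNorm (f i) 2 μ).toReal ^ 2) :
    ∀ᵐ ω ∂μ, Summable fun i => f i ω ^ 2 := by
  have hterm (i : ι) : eLpNorm (fun ω => f i ω ^ 2) 1 μ
      = ENNReal.ofReal ((eLpNorm (f i) 2 μ).toReal ^ 2) := by
    rw [eLpNorm_sq_one, ENNReal.ofReal_pow ENNReal.toReal_nonneg,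
      ENNReal.ofReal_toReal (hf i).eLpNorm_ne_top]
  have hne : ∑' i, eLpNorm (fun ω => f i ω ^ 2) 1 μ ≠ ⊤ := by
    simp_rw [hterm, ← ENNReal.ofReal_tsum_of_nonneg (fun _ => sq_nonneg _) hsum]
    exact ENNReal.ofReal_ne_top
  filter_upwards [summable_norm_of_tsum_eLpNorm_ne_top le_rfl
    (fun i => (hf i).aestronglyMeasurable.pow 2) hne] with ω hω
  simpa only [Pi.pow_apply, Real.norm_eq_abs, abs_pow, sq_abs] using hω

lemma sum_Icc_one_eq_sum_range {M : Type*} [AddCommMonoid M] (f : ℕ → M) (k : ℕ) :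
    ∑ i ∈ Icc 1 k, f i = ∑ i ∈ range k, f (i + 1) := by
  rw [range_eq_Ico, sum_Ico_add', ← Ico_add_one_right_eq_Icc]

theorem stmt8_general {Ω : Type*} [m0 : MeasurableSpace Ω] (μ : Measure Ω) [IsProbabilityMeasure μ]
    (F0 : MeasurableSpace Ω) (X : ℕ → Ω → ℝ)
    (hX : ∀ i, MemLp (X i) 2 μ)
    (hsum : Summable (fun k : ℕ => ((eLpNorm (condExp F0 μ (X (k + 1))) 2 μ).toReal) ^ 2)) :
    ∀ᵐ ω ∂μ, Tendsto (fun n : ℕ => (1 / (n : ℝ)) *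
      ⨆ k : Finset.Icc 1 n,
        (condExp F0 μ (fun ω' => ∑ i ∈ Finset.Icc 1 (k : ℕ), X i ω') ω) ^ 2)
      atTop (nhds 0) := by
  have hsq : ∀ᵐ ω ∂μ, Summable fun k => μ[X (k + 1)|F0] ω ^ 2 :=
    ae_summable_sq_of_summable_sq_eLpNorm (fun k => (hX (k + 1)).condExp one_le_two) hsum
  have hS : ∀ᵐ ω ∂μ, ∀ k, μ[fun ω' => ∑ i ∈ Icc 1 k, X i ω'|F0] ω
      = ∑ i ∈ range k, μ[X (i + 1)|F0] ω := by
    refine ae_all_iff.2 fun k => ?_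
    filter_upwards [condExp_finsetSum (fun i _ => (hX i).integrable one_le_two) F0] with ω hω
    rw [← sum_fn, hω, Finset.sum_apply, sum_Icc_one_eq_sum_range (fun i => μ[X i|F0] ω)]
  filter_upwards [hsq, hS] with ω hω hSω
  simpa only [hSω] using tendsto_one_div_mul_iSup_sq_sum_range hω

/-- If `∑_k ‖E(X_k|F₀)‖₂² < ∞`, then `n⁻¹ max_{1≤k≤n} (E(S_k|F₀))² → 0` almost surely,
where `S_k = X_1 + ⋯ + X_k`. -/
theorem stmt8 {Ω : Type*} [m0 : MeasurableSpace Ω] (μ : Measure Ω) [IsProbabilityMeasure μ]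
    (F0 : MeasurableSpace Ω) (hF0 : F0 ≤ m0) (X : ℕ → Ω → ℝ)
    (hX : ∀ i, MemLp (X i) 2 μ)
    (hsum : Summable (fun k : ℕ => ((eLpNorm (condExp F0 μ (X (k + 1))) 2 μ).toReal) ^ 2)) :
    ∀ᵐ ω ∂μ, Tendsto (fun n : ℕ => (1 / (n : ℝ)) *
      ⨆ k : Finset.Icc 1 n,
        (condExp F0 μ (fun ω' => ∑ i ∈ Finset.Icc 1 (k : ℕ), X i ω') ω) ^ 2)
      atTop (nhds 0) :=
  stmt8_general (m0 := m0) μ F0 X hX hsum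
end
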